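/- arXiv:1903.11699 — 7 statements merged into one kernel-verified Lean document; each statement's English description precedes it below -/
import Mathlib

section
/- If u is a smooth divergence-free vector field on R^3 solving the steady Euler equations u·∇u + ∇p = 0, with u decaying sufficiently fast (e.g. u and p compactly supported), then for all indices i,j: ∫ u_i u_j dx = -δ_{ij} ∫ p dx. In particular the components of u are pairwise orthogonal in L^2 and have equal L^2 norms, and ∫ p dx ≤ 0. -/
open MeasureTheory

/-- For smooth compactly supported solutions `(u, p)` of the steady
incompressible 3D Euler equations, `∫ uᵢ uⱼ = -δᵢⱼ ∫ p`; in particular the components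
of `u` are pairwise orthogonal with equal `L²` norms and `∫ p ≤ 0`. -/
theorem steady_euler_stress_identity
    (u : Fin 3 → EuclideanSpace ℝ (Fin 3) → ℝ) (p : EuclideanSpace ℝ (Fin 3) → ℝ)
    (hu_smooth : ∀ i, ContDiff ℝ (⊤ : ℕ∞) (u i))
    (hu_supp : ∀ i, HasCompactSupport (u i))
    (hp_smooth : ContDiff ℝ (⊤ : ℕ∞) p)
    (hp_supp : HasCompactSupport p)
    (hdiv : ∀ x, (∑ i, fderiv ℝ (u i) x (EuclideanSpace.single i 1)) = 0)
    (heuler : ∀ x, ∀ j, (∑ i, u i x * fderiv ℝ (u j) x (EuclideanSpace.single i 1))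
      + fderiv ℝ p x (EuclideanSpace.single j 1) = 0) :
    (∀ i j, ∫ x, u i x * u j x =
      -(if i = j then (1:ℝ) else 0) * ∫ x, p x) ∧
    (∀ i j, i ≠ j → ∫ x, u i x * u j x = 0) ∧
    (∀ i j, ∫ x, u i x * u i x = ∫ x, u j x * u j x) ∧
    (∫ x, p x) ≤ 0 := by
  have key : ∀ i j : Fin 3,
      (∫ x, u i x * u j x) + (if i = j then (1:ℝ) else 0) * ∫ x, p x = 0 := by
    intro i j
    set g : Fin 3 → EuclideanSpace ℝ (Fin 3) → ℝ :=
      fun k x => u k x * u i x + (if k = i then (1:ℝ) else 0) * p x with hgdef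
    have hg_smooth : ∀ k, ContDiff ℝ (⊤ : ℕ∞) (g k) := fun k =>
      ((hu_smooth k).mul (hu_smooth i)).add (contDiff_const.mul hp_smooth)
    have hg_supp : ∀ k, HasCompactSupport (g k) := fun k =>
      ((hu_supp k).mul_right).add (hp_supp.mul_left)
    have hgd : ∀ k x (v : EuclideanSpace ℝ (Fin 3)), fderiv ℝ (g k) x v =
        u k x * fderiv ℝ (u i) x v + fderiv ℝ (u k) x v * u i x
          + (if k = i then (1:ℝ) else 0) * fderiv ℝ p x v := by
      intro k x v
      have hk := ((hu_smooth k).differentiable (by simp)).differentiableAt (x := x)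
      have hi := ((hu_smooth i).differentiable (by simp)).differentiableAt (x := x)
      have hp' := (hp_smooth.differentiable (by simp)).differentiableAt (x := x)
      have : fderiv ℝ (g k) x =
          (u k x • fderiv ℝ (u i) x + u i x • fderiv ℝ (u k) x)
            + (if k = i then (1:ℝ) else 0) • fderiv ℝ p x := by
        rw [hgdef]
        rw [fderiv_fun_add (hk.fun_mul hi) ((differentiableAt_const _).fun_mul hp'),
          fderiv_fun_mul hk hi, fderiv_const_mul hp']
      rw [this]
      simp [smul_eq_mul, apply_ite (fun L : EuclideanSpace ℝ (Fin 3) →L[ℝ] ℝ => L v)]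
      ring
    have hdivg : ∀ x, (∑ k, fderiv ℝ (g k) x (EuclideanSpace.single k 1)) = 0 := by
      intro x
      simp only [hgd]
      rw [Finset.sum_add_distrib, Finset.sum_add_distrib]
      have h1 : (∑ k, fderiv ℝ (u k) x (EuclideanSpace.single k 1) * u i x) = 0 := by
        rw [← Finset.sum_mul, hdiv x, zero_mul]
      have h2 : (∑ k, (if k = i then (1:ℝ) else 0) * fderiv ℝ p x (EuclideanSpace.single k 1))
          = fderiv ℝ p x (EuclideanSpace.single i 1) := by
        simp [ite_mul]
      rw [h1, h2]
      have := heuler x i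
      linarith
    -- the coordinate function
    set c : EuclideanSpace ℝ (Fin 3) → ℝ := fun x => x j with hcdef
    have hc : c = ⇑(EuclideanSpace.proj (𝕜 := ℝ) j) := by
      ext x; simp [hcdef]
    have hc_diff : Differentiable ℝ c := by
      rw [hc]; exact (EuclideanSpace.proj (𝕜 := ℝ) j).differentiable
    have hc_cont : Continuous c := hc_diff.continuous
    have hcd : ∀ x (v : EuclideanSpace ℝ (Fin 3)), fderiv ℝ c x v = v j := by
      intro x v
      rw [hc, ContinuousLinearMap.fderiv]
      simp
    have hgc : ∀ k, Continuous (g k) := fun k => (hg_smooth k).continuous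
    have hgdc : ∀ k, Continuous (fun x => fderiv ℝ (g k) x (EuclideanSpace.single k 1)) := by
      intro k
      exact (ContinuousLinearMap.apply ℝ ℝ (EuclideanSpace.single k 1)).continuous.comp
        ((hg_smooth k).continuous_fderiv (by simp))
    have hgds : ∀ k, HasCompactSupport (fun x => fderiv ℝ (g k) x (EuclideanSpace.single k 1)) := by
      intro k
      exact ((hg_supp k).fderiv ℝ).comp_left (g := fun L : _ →L[ℝ] ℝ =>
        L (EuclideanSpace.single k 1)) (by simp)
    have int1 : ∀ k, Integrable (fun x => c x * fderiv ℝ (g k) x (EuclideanSpace.single k 1)) := by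
      intro k
      exact (hc_cont.mul (hgdc k)).integrable_of_hasCompactSupport ((hgds k).mul_left)
    have hIBP : ∀ k, (∫ x, c x * fderiv ℝ (g k) x (EuclideanSpace.single k 1))
        = - ∫ x, fderiv ℝ c x (EuclideanSpace.single k 1) * g k x := by
      intro k
      apply integral_mul_fderiv_eq_neg_fderiv_mul_of_integrable
      · have : Continuous (fun x => fderiv ℝ c x (EuclideanSpace.single k 1) * g k x) := by
          simp only [hcd]; exact continuous_const.mul (hgc k)
        exact this.integrable_of_hasCompactSupport ((hg_supp k).mul_left)
      · exact int1 k
      · exact (hc_cont.mul (hgc k)).integrable_of_hasCompactSupport ((hg_supp k).mul_left)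
      · exact fun x _ => hc_diff x
      · exact fun x _ => (hg_smooth k).differentiable (by simp) x
    have hsum0 : (∑ k, ∫ x, c x * fderiv ℝ (g k) x (EuclideanSpace.single k 1)) = 0 := by
      rw [← integral_finset_sum _ (fun k _ => int1 k)]
      have : ∀ x : EuclideanSpace ℝ (Fin 3),
          (∑ k, c x * fderiv ℝ (g k) x (EuclideanSpace.single k 1)) = 0 := by
        intro x
        rw [← Finset.mul_sum, hdivg x, mul_zero]
      simp only [this, integral_zero]
    have hsum1 : (∑ k, ∫ x, c x * fderiv ℝ (g k) x (EuclideanSpace.single k 1))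
        = - ∫ x, g j x := by
      rw [Finset.sum_congr rfl (fun k _ => hIBP k)]
      have : ∀ k : Fin 3, (∫ x, fderiv ℝ c x (EuclideanSpace.single k 1) * g k x)
          = (if k = j then (1:ℝ) else 0) * ∫ x, g k x := by
        intro k
        have hs : ∀ x : EuclideanSpace ℝ (Fin 3),
            fderiv ℝ c x (EuclideanSpace.single k 1) = (if k = j then (1:ℝ) else 0) := by
          intro x
          rw [hcd, EuclideanSpace.single_apply]
          by_cases h : k = j
          · simp [h]
          · rw [if_neg (fun hh => h hh.symm), if_neg h]
        simp only [hs]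
        by_cases h : k = j <;> simp [h]
      simp only [this]
      rw [← neg_eq_iff_eq_neg] at *
      rw [← Finset.sum_neg_distrib] at *
      simp [ite_mul]
    have hgj : (∫ x, g j x) = 0 := by
      have h := hsum0
      rw [hsum1] at h
      linarith
    have intuu : Integrable (fun x => u j x * u i x) :=
      ((hu_smooth j).continuous.mul (hu_smooth i).continuous).integrable_of_hasCompactSupport
        ((hu_supp j).mul_right)
    have intp : Integrable (fun x => (if j = i then (1:ℝ) else 0) * p x) :=
      (continuous_const.mul hp_smooth.continuous).integrable_of_hasCompactSupport
        (hp_supp.mul_left)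
    have : (∫ x, u j x * u i x) + ∫ x, (if j = i then (1:ℝ) else 0) * p x = 0 := by
      rw [← integral_add intuu intp]
      exact hgj
    have hcomm : (∫ x, u j x * u i x) = ∫ x, u i x * u j x := by
      congr 1; ext x; ring
    rw [hcomm, integral_const_mul] at this
    have hij : (if j = i then (1:ℝ) else 0) = (if i = j then (1:ℝ) else 0) := by
      by_cases h : i = j <;> simp [h, eq_comm]
    rw [hij] at this
    exact this
  refine ⟨fun i j => ?_, fun i j hij => ?_, fun i j => ?_, ?_⟩
  · have := key i j; linarith
  · have := key i j; simp [hij] at this; exact this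
  · have h1 := key i i; have h2 := key j j; simp at h1 h2; linarith
  · have h := key 0 0
    simp at h
    have h2 : 0 ≤ ∫ x, u 0 x * u 0 x := integral_nonneg fun x => mul_self_nonneg _
    linarith
end

section
/- Let u, p be a smooth solution of the steady incompressible Euler equations (u·∇u + ∇p = 0, div u = 0) on an open set Ω ⊆ R^3, and suppose u·∇p = 0 on Ω. Then for any smooth function φ : R → R, the field ũ = φ(p)·u is divergence-free and solves ũ·∇ũ + ∇p̃ = 0 where ∇p̃ = φ(p)^2 ∇p. -/
/-- (Gavrilov's localization remark) If `(u, p)` is a smooth steady solution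
of the incompressible Euler equations on an open set `Ω ⊆ ℝ³` with `u·∇p = 0`, then for any
smooth `φ : ℝ → ℝ`, the rescaled field `ũ = φ(p)·u` is divergence-free and solves
`ũ·∇ũ + ∇p̃ = 0` for any `p̃` with `∇p̃ = φ(p)² ∇p` on `Ω`. -/
theorem euler_localization
    (Ω : Set (EuclideanSpace ℝ (Fin 3))) (hΩ : IsOpen Ω)
    (u : Fin 3 → EuclideanSpace ℝ (Fin 3) → ℝ)
    (p : EuclideanSpace ℝ (Fin 3) → ℝ)
    (hu_smooth : ∀ i, ContDiffOn ℝ (⊤ : ℕ∞) (u i) Ω)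
    (hp_smooth : ContDiffOn ℝ (⊤ : ℕ∞) p Ω)
    (hdiv : ∀ x ∈ Ω, (∑ i, fderiv ℝ (u i) x (EuclideanSpace.single i 1)) = 0)
    (heuler : ∀ x ∈ Ω, ∀ j,
      (∑ i, u i x * fderiv ℝ (u j) x (EuclideanSpace.single i 1))
        + fderiv ℝ p x (EuclideanSpace.single j 1) = 0)
    (horth : ∀ x ∈ Ω, (∑ i, u i x * fderiv ℝ p x (EuclideanSpace.single i 1)) = 0)
    (φ : ℝ → ℝ) (hφ : ContDiff ℝ (⊤ : ℕ∞) φ)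
    (pt : EuclideanSpace ℝ (Fin 3) → ℝ)
    (hpt : ∀ x ∈ Ω, fderiv ℝ pt x = (φ (p x))^2 • fderiv ℝ p x) :
    (∀ x ∈ Ω,
      (∑ i, fderiv ℝ (fun y => φ (p y) * u i y) x (EuclideanSpace.single i 1)) = 0) ∧
    (∀ x ∈ Ω, ∀ j,
      (∑ i, φ (p x) * u i x *
          fderiv ℝ (fun y => φ (p y) * u j y) x (EuclideanSpace.single i 1))
        + fderiv ℝ pt x (EuclideanSpace.single j 1) = 0) := by
  -- key derivative formula
  have key : ∀ x ∈ Ω, ∀ j v, fderiv ℝ (fun y => φ (p y) * u j y) x v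
      = φ (p x) * fderiv ℝ (u j) x v + u j x * (deriv φ (p x) * fderiv ℝ p x v) := by
    intro x hx j v
    have hp : DifferentiableAt ℝ p x :=
      (hp_smooth.contDiffAt (hΩ.mem_nhds hx)).differentiableAt (by simp)
    have hu : DifferentiableAt ℝ (u j) x :=
      ((hu_smooth j).contDiffAt (hΩ.mem_nhds hx)).differentiableAt (by simp)
    have hφd : DifferentiableAt ℝ φ (p x) := (hφ.differentiable (by simp)).differentiableAt
    have hc : DifferentiableAt ℝ (fun y => φ (p y)) x := hφd.comp x hp
    rw [fderiv_fun_mul hc hu]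
    have hcomp : fderiv ℝ (fun y => φ (p y)) x = (fderiv ℝ φ (p x)).comp (fderiv ℝ p x) :=
      fderiv_comp x hφd hp
    have happ : fderiv ℝ (fun y => φ (p y)) x v = deriv φ (p x) * fderiv ℝ p x v := by
      rw [hcomp]
      simp [ContinuousLinearMap.comp_apply]
      ring
    simp [happ]
  constructor
  · intro x hx
    have : (∑ i, fderiv ℝ (fun y => φ (p y) * u i y) x (EuclideanSpace.single i 1))
        = φ (p x) * (∑ i, fderiv ℝ (u i) x (EuclideanSpace.single i 1))
          + deriv φ (p x) * (∑ i, u i x * fderiv ℝ p x (EuclideanSpace.single i 1)) := by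
      rw [Finset.mul_sum, Finset.mul_sum, ← Finset.sum_add_distrib]
      exact Finset.sum_congr rfl fun i _ => by rw [key x hx i]; ring
    rw [this, hdiv x hx, horth x hx]; ring
  · intro x hx j
    have hsum : (∑ i, φ (p x) * u i x *
          fderiv ℝ (fun y => φ (p y) * u j y) x (EuclideanSpace.single i 1))
        = φ (p x) ^ 2 * (∑ i, u i x * fderiv ℝ (u j) x (EuclideanSpace.single i 1))
          + φ (p x) * u j x * deriv φ (p x) *
            (∑ i, u i x * fderiv ℝ p x (EuclideanSpace.single i 1)) := by
      rw [Finset.mul_sum, Finset.mul_sum, ← Finset.sum_add_distrib]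
      exact Finset.sum_congr rfl fun i _ => by rw [key x hx j]; ring
    rw [hsum, horth x hx, hpt x hx]
    have he := heuler x hx j
    simp only [ContinuousLinearMap.smul_apply, smul_eq_mul]
    nlinarith [he]
end

section
/- Suppose ψ(r,z) solves the Grad-Shafranov equation −Δ*ψ = (d/dψ)(F(ψ)²/2 + r² P(ψ)) on an open subset of {r > 0}. Then the velocity u given by the Grad-Shafranov ansatz and the pressure p defined by p = −P(ψ) − |u|²/2 satisfy the steady Euler equations u·∇u + ∇p = 0 and div u = 0. -/
/-- Partial derivative in the first variable. -/
noncomputable def pd1 (f : ℝ → ℝ → ℝ) (x y : ℝ) : ℝ := deriv (fun s => f s y) x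

/-- Partial derivative in the second variable. -/
noncomputable def pd2 (f : ℝ → ℝ → ℝ) (x y : ℝ) : ℝ := deriv (fun s => f x s) y

/-- Grad-Shafranov operator `Δ*ψ = ∂_r²ψ − (1/r)∂_rψ + ∂_z²ψ`. -/
noncomputable def gradShafranovOp (ψ : ℝ → ℝ → ℝ) (r z : ℝ) : ℝ :=
  pd1 (pd1 ψ) r z - (1/r) * pd1 ψ r z + pd2 (pd2 ψ) r z

/-- If `ψ` solves the Grad-Shafranov equation
`−Δ*ψ = ∂_ψ(F²/2 + r² P)`, then the velocity `u` of the Grad-Shafranov ansatz together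
with the pressure `p = −P(ψ) − |u|²/2` solves the steady Euler equations: `u` is
divergence-free and `ω × u + ∇(|u|²/2 + p) = 0` where `ω = curl u`, written
componentwise in the cylindrical frame `(e_r, e_φ, e_z)`. -/
theorem grad_shafranov_solves_euler
    (Ω : Set (ℝ × ℝ)) (hΩ : IsOpen Ω) (hr : ∀ q ∈ Ω, 0 < q.1)
    (ψ : ℝ → ℝ → ℝ) (hψ : ContDiffOn ℝ (⊤ : ℕ∞) (fun q : ℝ × ℝ => ψ q.1 q.2) Ω)
    (F P : ℝ → ℝ) (hF : ContDiff ℝ (⊤ : ℕ∞) F) (hP : ContDiff ℝ (⊤ : ℕ∞) P)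
    (hGS : ∀ q ∈ Ω, -(gradShafranovOp ψ q.1 q.2) =
      deriv (fun t => (F t)^2/2) (ψ q.1 q.2) + q.1^2 * deriv P (ψ q.1 q.2))
    (ur uφ uz ωr ωφ ωz p e : ℝ → ℝ → ℝ)
    (hur : ∀ r z, ur r z = (1/r) * pd2 ψ r z)
    (huφ : ∀ r z, uφ r z = (1/r) * F (ψ r z))
    (huz : ∀ r z, uz r z = -(1/r) * pd1 ψ r z)
    (hωr : ∀ r z, ωr r z = -(pd2 uφ r z))
    (hωφ : ∀ r z, ωφ r z = pd2 ur r z - pd1 uz r z)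
    (hωz : ∀ r z, ωz r z = (1/r) * pd1 (fun r' z' => r' * uφ r' z') r z)
    (hp : ∀ r z, p r z =
      -(P (ψ r z)) - ((ur r z)^2 + (uφ r z)^2 + (uz r z)^2)/2)
    (he : ∀ r z, e r z = ((ur r z)^2 + (uφ r z)^2 + (uz r z)^2)/2 + p r z) :
    ∀ q ∈ Ω,
      (1/q.1) * pd1 (fun r z => r * ur r z) q.1 q.2 + pd2 uz q.1 q.2 = 0 ∧
      ωφ q.1 q.2 * uz q.1 q.2 - ωz q.1 q.2 * uφ q.1 q.2 + pd1 e q.1 q.2 = 0 ∧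
      ωz q.1 q.2 * ur q.1 q.2 - ωr q.1 q.2 * uz q.1 q.2 = 0 ∧
      ωr q.1 q.2 * uφ q.1 q.2 - ωφ q.1 q.2 * ur q.1 q.2 + pd2 e q.1 q.2 = 0 := by
  intro q hq
  obtain ⟨a, b⟩ := q
  have ha : 0 < a := hr (a, b) hq
  have ha' : a ≠ 0 := ne_of_gt ha
  set Ψ : ℝ × ℝ → ℝ := fun p => ψ p.1 p.2 with hΨdef
  set g : ℝ × ℝ → (ℝ × ℝ) →L[ℝ] ℝ := fderiv ℝ Ψ with hgdef
  have hdiff : ∀ p ∈ Ω, HasFDerivAt Ψ (g p) p := fun p hp' =>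
    ((hψ.contDiffAt (hΩ.mem_nhds hp')).differentiableAt (by simp)).hasFDerivAt
  have gC : ContDiffOn ℝ (⊤ : ℕ∞) g Ω := hψ.fderiv_of_isOpen hΩ (by simp)
  set Gq : (ℝ × ℝ) →L[ℝ] (ℝ × ℝ) →L[ℝ] ℝ := fderiv ℝ g (a, b) with hGqdef
  have hg : HasFDerivAt g Gq (a, b) :=
    ((gC.contDiffAt (hΩ.mem_nhds hq)).differentiableAt (by simp)).hasFDerivAt
  have hev : ∀ᶠ y in nhds (a, b), HasFDerivAt Ψ (g y) y :=
    Filter.eventually_of_mem (hΩ.mem_nhds hq) (fun y hy => hdiff y hy)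
  have hsym : ∀ v w, Gq v w = Gq w v := fun v w =>
    second_derivative_symmetric_of_eventually hev hg v w
  -- slice derivatives of ψ
  have hline1 : ∀ s : ℝ, HasDerivAt (fun s' : ℝ => (s', b)) ((1:ℝ), (0:ℝ)) s :=
    fun s => (hasDerivAt_id s).prodMk (hasDerivAt_const s b)
  have hline2 : ∀ t : ℝ, HasDerivAt (fun t' : ℝ => (a, t')) ((0:ℝ), (1:ℝ)) t :=
    fun t => (hasDerivAt_const t a).prodMk (hasDerivAt_id t)
  have key1 : ∀ p ∈ Ω, HasDerivAt (fun s => ψ s p.2) (g p (1, 0)) p.1 := by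
    intro p hp'
    have h1 : HasDerivAt (fun s' : ℝ => (s', p.2)) ((1:ℝ), (0:ℝ)) p.1 :=
      (hasDerivAt_id p.1).prodMk (hasDerivAt_const p.1 p.2)
    have := (hdiff p hp').comp_hasDerivAt p.1 h1
    simpa [Function.comp_def] using this
  have key2 : ∀ p ∈ Ω, HasDerivAt (fun t => ψ p.1 t) (g p (0, 1)) p.2 := by
    intro p hp'
    have h1 : HasDerivAt (fun t' : ℝ => (p.1, t')) ((0:ℝ), (1:ℝ)) p.2 :=
      (hasDerivAt_const p.2 p.1).prodMk (hasDerivAt_id p.2)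
    have := (hdiff p hp').comp_hasDerivAt p.2 h1
    simpa [Function.comp_def] using this
  have hpd1 : ∀ p ∈ Ω, pd1 ψ p.1 p.2 = g p (1, 0) := fun p hp' => (key1 p hp').deriv
  have hpd2 : ∀ p ∈ Ω, pd2 ψ p.1 p.2 = g p (0, 1) := fun p hp' => (key2 p hp').deriv
  -- second order slice derivatives
  have keyg1 : ∀ v : ℝ × ℝ, HasDerivAt (fun s => g (s, b) v) (Gq (1, 0) v) a := by
    intro v
    have h2 : HasFDerivAt (fun p => g p v) (Gq.flip v) (a, b) := by
      have := hg.clm_apply (hasFDerivAt_const v (a, b))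
      simpa using this
    have := h2.comp_hasDerivAt a (hline1 a)
    simpa [Function.comp_def] using this
  have keyg2 : ∀ v : ℝ × ℝ, HasDerivAt (fun t => g (a, t) v) (Gq (0, 1) v) b := by
    intro v
    have h2 : HasFDerivAt (fun p => g p v) (Gq.flip v) (a, b) := by
      have := hg.clm_apply (hasFDerivAt_const v (a, b))
      simpa using this
    have := h2.comp_hasDerivAt b (hline2 b)
    simpa [Function.comp_def] using this
  -- neighborhood facts
  have hU1 : ∀ᶠ s in nhds a, (s, b) ∈ Ω := by
    have hc : ContinuousAt (fun s : ℝ => (s, b)) a :=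
      (continuous_id.prodMk continuous_const).continuousAt
    exact hc.preimage_mem_nhds (hΩ.mem_nhds hq)
  have hU2 : ∀ᶠ t in nhds b, (a, t) ∈ Ω := by
    have hc : ContinuousAt (fun t : ℝ => (a, t)) b :=
      (continuous_const.prodMk continuous_id).continuousAt
    exact hc.preimage_mem_nhds (hΩ.mem_nhds hq)
  have hpos : ∀ᶠ s in nhds a, (0:ℝ) < s := eventually_gt_nhds ha
  -- abbreviations
  set c := ψ a b with hc
  set ψ1 := g (a, b) (1, 0) with hψ1def
  set ψ2 := g (a, b) (0, 1) with hψ2def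
  set ψ11 := Gq (1, 0) (1, 0) with hψ11def
  set m12 := Gq (1, 0) (0, 1) with hm12def
  set m21 := Gq (0, 1) (1, 0) with hm21def
  set ψ22 := Gq (0, 1) (0, 1) with hψ22def
  have hmm : m12 = m21 := hsym (1, 0) (0, 1)
  set F' := deriv F c with hF'def
  set P' := deriv P c with hP'def
  have hψ1v : pd1 ψ a b = ψ1 := hpd1 (a, b) hq
  have hψ2v : pd2 ψ a b = ψ2 := hpd2 (a, b) hq
  -- second partials of ψ
  have hd11 : pd1 (pd1 ψ) a b = ψ11 := by
    have heq : (fun s => pd1 ψ s b) =ᶠ[nhds a] (fun s => g (s, b) (1, 0)) :=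
      hU1.mono fun s hs => hpd1 (s, b) hs
    exact ((keyg1 (1, 0)).congr_of_eventuallyEq heq).deriv
  have hd22 : pd2 (pd2 ψ) a b = ψ22 := by
    have heq : (fun t => pd2 ψ a t) =ᶠ[nhds b] (fun t => g (a, t) (0, 1)) :=
      hU2.mono fun t ht => hpd2 (a, t) ht
    exact ((keyg2 (0, 1)).congr_of_eventuallyEq heq).deriv
  -- F and P slice chain rules
  have hFc : HasDerivAt F F' c := (hF.differentiable (by simp) c).hasDerivAt
  have hPc : HasDerivAt P P' c := (hP.differentiable (by simp) c).hasDerivAt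
  have hFψ1 : HasDerivAt (fun s => F (ψ s b)) (F' * ψ1) a :=
    hFc.comp a (key1 (a, b) hq)
  have hFψ2 : HasDerivAt (fun t => F (ψ a t)) (F' * ψ2) b :=
    hFc.comp b (key2 (a, b) hq)
  have hPψ1 : HasDerivAt (fun s => P (ψ s b)) (P' * ψ1) a :=
    hPc.comp a (key1 (a, b) hq)
  have hPψ2 : HasDerivAt (fun t => P (ψ a t)) (P' * ψ2) b :=
    hPc.comp b (key2 (a, b) hq)
  -- divergence terms
  have hA : pd1 (fun r z => r * ur r z) a b = m12 := by
    have heq : (fun s => s * ur s b) =ᶠ[nhds a] (fun s => g (s, b) (0, 1)) := by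
      filter_upwards [hU1, hpos] with s hs hs0
      rw [hur, ← hpd2 (s, b) hs]
      field_simp
    exact ((keyg1 (0, 1)).congr_of_eventuallyEq heq).deriv
  have hB : pd2 uz a b = -(1/a) * m21 := by
    have heq : (fun t => uz a t) =ᶠ[nhds b] (fun t => -(1/a) * g (a, t) (1, 0)) := by
      filter_upwards [hU2] with t ht
      rw [huz, ← hpd1 (a, t) ht]
    exact (((keyg2 (1, 0)).const_mul (-(1/a))).congr_of_eventuallyEq heq).deriv
  -- ωφ pieces
  have hC : pd2 ur a b = (1/a) * ψ22 := by
    have heq : (fun t => ur a t) =ᶠ[nhds b] (fun t => (1/a) * g (a, t) (0, 1)) := by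
      filter_upwards [hU2] with t ht
      rw [hur, ← hpd2 (a, t) ht]
    exact (((keyg2 (0, 1)).const_mul (1/a)).congr_of_eventuallyEq heq).deriv
  have hD : pd1 uz a b = (a^2)⁻¹ * ψ1 + -(1/a) * ψ11 := by
    have hinv : HasDerivAt (fun s : ℝ => -(1/s)) ((a^2)⁻¹) a := by
      simpa [one_div] using (hasDerivAt_inv ha').fun_neg
    have hmul := hinv.mul (keyg1 (1, 0))
    have heq : (fun s => uz s b) =ᶠ[nhds a] (fun s => -(1/s) * g (s, b) (1, 0)) := by
      filter_upwards [hU1] with s hs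
      rw [huz, ← hpd1 (s, b) hs]
    exact (hmul.congr_of_eventuallyEq heq).deriv
  -- ωr, ωz pieces
  have hE : pd2 uφ a b = (1/a) * (F' * ψ2) := by
    have heq : (fun t => uφ a t) = (fun t => (1/a) * F (ψ a t)) := by
      funext t; rw [huφ]
    unfold pd2
    rw [heq]
    exact (hFψ2.const_mul (1/a)).deriv
  have hG : pd1 (fun r' z' => r' * uφ r' z') a b = F' * ψ1 := by
    have heq : (fun s => s * uφ s b) =ᶠ[nhds a] (fun s => F (ψ s b)) := by
      filter_upwards [hpos] with s hs0
      rw [huφ]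
      field_simp
    exact (hFψ1.congr_of_eventuallyEq heq).deriv
  -- e = -P ∘ ψ
  have hefun : ∀ r z, e r z = -(P (ψ r z)) := by
    intro r z; rw [he, hp]; ring
  have hE1 : pd1 e a b = -(P' * ψ1) := by
    have heq : (fun s => e s b) = (fun s => -(P (ψ s b))) := by
      funext s; rw [hefun]
    unfold pd1
    rw [heq]
    exact hPψ1.neg.deriv
  have hE2 : pd2 e a b = -(P' * ψ2) := by
    have heq : (fun t => e a t) = (fun t => -(P (ψ a t))) := by
      funext t; rw [hefun]
    unfold pd2
    rw [heq]
    exact hPψ2.neg.deriv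
  -- Grad-Shafranov equation in terms of the abbreviations
  have hF2 : deriv (fun t => (F t)^2/2) c = F c * F' := by
    have h := (hFc.fun_pow 2).div_const 2
    have := h.deriv
    rw [this]; push_cast; ring
  have hGS' : -(ψ11 - (1/a) * ψ1 + ψ22) = F c * F' + a^2 * P' := by
    have := hGS (a, b) hq
    simp only [gradShafranovOp] at this
    rw [hd11, hd22, hψ1v, hF2] at this
    exact this
  -- values at the point
  have hurv : ur a b = (1/a) * ψ2 := by rw [hur, hψ2v]
  have huφv : uφ a b = (1/a) * F c := by rw [huφ]
  have huzv : uz a b = -(1/a) * ψ1 := by rw [huz, hψ1v]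
  have hωrv : ωr a b = -((1/a) * (F' * ψ2)) := by rw [hωr, hE]
  have hωφv : ωφ a b = (1/a) * ψ22 - ((a^2)⁻¹ * ψ1 + -(1/a) * ψ11) := by
    rw [hωφ, hC, hD]
  have hωzv : ωz a b = (1/a) * (F' * ψ1) := by rw [hωz, hG]
  refine ⟨?_, ?_, ?_, ?_⟩
  · show (1/a) * pd1 (fun r z => r * ur r z) a b + pd2 uz a b = 0
    rw [hA, hB, hmm]; ring
  · show ωφ a b * uz a b - ωz a b * uφ a b + pd1 e a b = 0
    rw [hωφv, hωzv, huzv, huφv, hE1]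
    have h1 : a * a⁻¹ = 1 := mul_inv_cancel₀ ha'
    linear_combination (ψ1/a^2) * hGS' + ψ1 * P' * (a*a⁻¹ + 1) * h1
  · show ωz a b * ur a b - ωr a b * uz a b = 0
    rw [hωzv, hωrv, hurv, huzv]; ring
  · show ωr a b * uφ a b - ωφ a b * ur a b + pd2 e a b = 0
    rw [hωrv, hωφv, hurv, huφv, hE2]
    have h1 : a * a⁻¹ = 1 := mul_inv_cancel₀ ha'
    linear_combination (ψ2/a^2) * hGS' + ψ2 * P' * (a*a⁻¹ + 1) * h1
end

section
/- Let Q₃(r,ψ) = r³M(ψ) + rN(ψ) and Q₆(r,ψ) = 2r²A(ψ) − F(ψ)² − Q₃(r,ψ)², with M, N, A, F differentiable functions of ψ. Then the polynomial identity (in r) ∂_r Q₆ + Q₃ ∂_ψ Q₆ − 2(∂_ψ Q₃) Q₆ = 0 holds for all r if and only if the three ODEs hold: (i) A'M − 3M² − 2AM' = 0; (ii) 8MN + M(F²)' − 2M'F² + N(N²−2A)' − 2N'(N²−2A) = 0; (iii) 2(N²−2A) + N(F²)' − 2N'F² = 0. -/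
/-!
Once the three partial derivatives are computed, the cubic terms `Q₃² ∂_ψ Q₃` coming from
`Q₃ ∂_ψ Q₆` and from `2 (∂_ψ Q₃) Q₆` cancel, leaving an odd quintic in `r` whose coefficients of
`r⁵`, `r³`, `r` are, up to the factors `2`, `-1`, `-1`, the three ODEs. An odd quintic vanishes
identically iff its coefficients vanish, as one sees by evaluating it at `r = 1, 2, 3`.
-/

theorem odd_quintic_eq_zero_iff {K : Type*} [Field K] [CharZero K] (a b c : K) :
    (∀ r : K, a * r ^ 5 + b * r ^ 3 + c * r = 0) ↔ a = 0 ∧ b = 0 ∧ c = 0 := by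
  refine ⟨fun h => ?_, fun ⟨ha, hb, hc⟩ r => by simp [ha, hb, hc]⟩
  have e1 := h 1
  have e2 := h 2
  have e3 := h 3
  have ha : a = 0 := by
    have : (120 : K) * a = 0 := by linear_combination 5 * e1 - 4 * e2 + e3
    simpa using this
  have hb : b = 0 := by
    have : (6 : K) * b = 0 := by linear_combination e2 - 2 * e1 - 30 * ha
    simpa using this
  exact ⟨ha, hb, by linear_combination e1 - ha - hb⟩

section Compatibility

variable {M N A F : ℝ → ℝ} {Q3 Q6 : ℝ → ℝ → ℝ} {ψ : ℝ}

theorem hasDerivAt_Q3_left (hQ3 : ∀ r t, Q3 r t = r ^ 3 * M t + r * N t) (r t : ℝ) :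
    HasDerivAt (fun s => Q3 s t) (3 * r ^ 2 * M t + N t) r := by
  simp only [hQ3]
  exact (((hasDerivAt_pow 3 r).mul_const (M t)).add ((hasDerivAt_id r).mul_const (N t))).congr_deriv
    (by simp)

theorem hasDerivAt_Q3_right (hM : DifferentiableAt ℝ M ψ) (hN : DifferentiableAt ℝ N ψ)
    (hQ3 : ∀ r t, Q3 r t = r ^ 3 * M t + r * N t) (r : ℝ) :
    HasDerivAt (fun t => Q3 r t) (r ^ 3 * deriv M ψ + r * deriv N ψ) ψ := by
  simp only [hQ3]
  exact (hM.hasDerivAt.const_mul (r ^ 3)).add (hN.hasDerivAt.const_mul r)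

theorem hasDerivAt_Q6_left (hQ3 : ∀ r t, Q3 r t = r ^ 3 * M t + r * N t)
    (hQ6 : ∀ r t, Q6 r t = 2 * r ^ 2 * A t - (F t) ^ 2 - (Q3 r t) ^ 2) (r t : ℝ) :
    HasDerivAt (fun s => Q6 s t) (4 * r * A t - 2 * Q3 r t * (3 * r ^ 2 * M t + N t)) r := by
  simp only [hQ6]
  have hsq := ((hasDerivAt_pow 2 r).const_mul 2).mul_const (A t)
  exact ((hsq.sub_const _).sub ((hasDerivAt_Q3_left hQ3 r t).pow 2)).congr_deriv (by ring)

theorem hasDerivAt_Q6_right (hM : DifferentiableAt ℝ M ψ) (hN : DifferentiableAt ℝ N ψ)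
    (hA : DifferentiableAt ℝ A ψ) (hF : DifferentiableAt ℝ F ψ)
    (hQ3 : ∀ r t, Q3 r t = r ^ 3 * M t + r * N t)
    (hQ6 : ∀ r t, Q6 r t = 2 * r ^ 2 * A t - (F t) ^ 2 - (Q3 r t) ^ 2) (r : ℝ) :
    HasDerivAt (fun t => Q6 r t) (2 * r ^ 2 * deriv A ψ - deriv (fun t => (F t) ^ 2) ψ
      - 2 * Q3 r ψ * (r ^ 3 * deriv M ψ + r * deriv N ψ)) ψ := by
  simp only [hQ6]
  have hF2 : HasDerivAt (fun t => (F t) ^ 2) (deriv (fun t => (F t) ^ 2) ψ) ψ :=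
    (hF.pow 2).hasDerivAt
  exact (((hA.hasDerivAt.const_mul (2 * r ^ 2)).sub hF2).sub
    ((hasDerivAt_Q3_right hM hN hQ3 r).pow 2)).congr_deriv (by ring)

theorem compatibility_eq_odd_quintic (hM : DifferentiableAt ℝ M ψ)
    (hN : DifferentiableAt ℝ N ψ) (hA : DifferentiableAt ℝ A ψ) (hF : DifferentiableAt ℝ F ψ)
    (hQ3 : ∀ r t, Q3 r t = r ^ 3 * M t + r * N t)
    (hQ6 : ∀ r t, Q6 r t = 2 * r ^ 2 * A t - (F t) ^ 2 - (Q3 r t) ^ 2) (r : ℝ) :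
    pd1 Q6 r ψ + Q3 r ψ * pd2 Q6 r ψ - 2 * pd2 Q3 r ψ * Q6 r ψ
      = 2 * (deriv A ψ * M ψ - 3 * (M ψ) ^ 2 - 2 * A ψ * deriv M ψ) * r ^ 5
        + -(8 * M ψ * N ψ + M ψ * deriv (fun t => (F t) ^ 2) ψ - 2 * deriv M ψ * (F ψ) ^ 2
            + N ψ * deriv (fun t => (N t) ^ 2 - 2 * A t) ψ
            - 2 * deriv N ψ * ((N ψ) ^ 2 - 2 * A ψ)) * r ^ 3
        + -(2 * ((N ψ) ^ 2 - 2 * A ψ) + N ψ * deriv (fun t => (F t) ^ 2) ψ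
            - 2 * deriv N ψ * (F ψ) ^ 2) * r := by
  have hNA : deriv (fun t => (N t) ^ 2 - 2 * A t) ψ = 2 * N ψ * deriv N ψ - 2 * deriv A ψ :=
    (((hN.hasDerivAt.pow 2).sub (hA.hasDerivAt.const_mul 2)).congr_deriv (by ring)).deriv
  rw [pd1, pd2, pd2, (hasDerivAt_Q6_left hQ3 hQ6 r ψ).deriv,
    (hasDerivAt_Q6_right hM hN hA hF hQ3 hQ6 r).deriv, (hasDerivAt_Q3_right hM hN hQ3 r).deriv,
    hQ6, hQ3, hNA]
  ring

end Compatibility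

/-- With `Q₃ = r³M + rN` and `Q₆ = 2r²A − F² − Q₃²`, the polynomial identity
in `r`, `∂_r Q₆ + Q₃ ∂_ψ Q₆ − 2(∂_ψ Q₃) Q₆ = 0`, holds for all `r` if and only if the
three ODEs (at the given `ψ`) hold:
(i) `A'M − 3M² − 2AM' = 0`;
(ii) `8MN + M(F²)' − 2M'F² + N(N²−2A)' − 2N'(N²−2A) = 0`;
(iii) `2(N²−2A) + N(F²)' − 2N'F² = 0`. -/
theorem polynomial_compatibility_iff_odes
    (M N A F : ℝ → ℝ) (ψ : ℝ)
    (hM : DifferentiableAt ℝ M ψ) (hN : DifferentiableAt ℝ N ψ)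
    (hA : DifferentiableAt ℝ A ψ) (hF : DifferentiableAt ℝ F ψ)
    (Q3 Q6 : ℝ → ℝ → ℝ)
    (hQ3 : ∀ r t, Q3 r t = r^3 * M t + r * N t)
    (hQ6 : ∀ r t, Q6 r t = 2*r^2*A t - (F t)^2 - (Q3 r t)^2) :
    (∀ r : ℝ, pd1 Q6 r ψ + Q3 r ψ * pd2 Q6 r ψ - 2 * pd2 Q3 r ψ * Q6 r ψ = 0) ↔
      (deriv A ψ * M ψ - 3*(M ψ)^2 - 2*A ψ*deriv M ψ = 0 ∧
       8*M ψ*N ψ + M ψ*deriv (fun t => (F t)^2) ψ - 2*deriv M ψ*(F ψ)^2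
         + N ψ*deriv (fun t => (N t)^2 - 2*A t) ψ
         - 2*deriv N ψ*((N ψ)^2 - 2*A ψ) = 0 ∧
       2*((N ψ)^2 - 2*A ψ) + N ψ*deriv (fun t => (F t)^2) ψ
         - 2*deriv N ψ*(F ψ)^2 = 0) := by
  simp only [compatibility_eq_odd_quintic hM hN hA hF hQ3 hQ6, odd_quintic_eq_zero_iff,
    mul_eq_zero, two_ne_zero, false_or, neg_eq_zero]
end

section
/- With P₆ and δ as above (P₆(x,δ(x)) = 0) and P₃(x,φ) = (1+x)[(1+x)² − b(φ)] satisfying the compatibility ∂_x P₆ + P₃ ∂_φ P₆ = 2(∂_φ P₃)P₆, the implicit boundary curve δ satisfies δ'(x) = P₃(x, δ(x)). Consequently δ'(0) = 0 and δ''(0) = ∂_x P₃(0,0) = 2, so δ has a strict local minimum 0 at x = 0. -/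
open Set Filter Topology

open Polynomial in
theorem finite_setOf_odd_septic_eq_zero {c₇ c₅ c₃ c₁ : ℝ} (h : c₇ ≠ 0 ∨ c₅ ≠ 0) :
    {t : ℝ | c₇ * t ^ 7 + c₅ * t ^ 5 + c₃ * t ^ 3 + c₁ * t = 0}.Finite := by
  set p : ℝ[X] := C c₇ * X ^ 7 + C c₅ * X ^ 5 + C c₃ * X ^ 3 + C c₁ * X
  have hp : p ≠ 0 := by
    intro hp
    have h7 := congrArg (coeff · 7) hp
    have h5 := congrArg (coeff · 5) hp
    simp [p] at h7 h5
    tauto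
  refine (finite_setOfPred_isRoot hp).subset fun t ht => ?_
  simpa [p] using ht

theorem eventually_lt_of_deriv_pos_nhdsGT {f : ℝ → ℝ} {x₀ : ℝ} (hc : ContinuousAt f x₀)
    (hd : ∀ᶠ x in 𝓝[>] x₀, 0 < deriv f x) : ∀ᶠ x in 𝓝[>] x₀, f x₀ < f x := by
  obtain ⟨u, hu, hsub⟩ := mem_nhdsGT_iff_exists_Ioo_subset.mp hd
  have hcont : ContinuousOn f (Ico x₀ u) := by
    rintro y ⟨hy₀, hyu⟩
    rcases hy₀.eq_or_lt with rfl | hy₀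
    · exact hc.continuousWithinAt
    · exact (differentiableAt_of_deriv_ne_zero (hsub ⟨hy₀, hyu⟩).ne').continuousAt
        |>.continuousWithinAt
  have hmono := strictMonoOn_of_deriv_pos (convex_Ico x₀ u) hcont (by rwa [interior_Ico])
  filter_upwards [Ioo_mem_nhdsGT hu] with x hx
  exact hmono (left_mem_Ico.2 hu) (Ioo_subset_Ico_self hx) hx.1

theorem eventually_lt_of_deriv_neg_nhdsLT {f : ℝ → ℝ} {x₀ : ℝ} (hc : ContinuousAt f x₀)
    (hd : ∀ᶠ x in 𝓝[<] x₀, deriv f x < 0) : ∀ᶠ x in 𝓝[<] x₀, f x₀ < f x := by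
  obtain ⟨u, hu, hsub⟩ := mem_nhdsLT_iff_exists_Ioo_subset.mp hd
  have hcont : ContinuousOn f (Ioc u x₀) := by
    rintro y ⟨huy, hy₀⟩
    rcases hy₀.eq_or_lt with rfl | hy₀
    · exact hc.continuousWithinAt
    · exact (differentiableAt_of_deriv_ne_zero (hsub ⟨huy, hy₀⟩).ne).continuousAt
        |>.continuousWithinAt
  have hanti := strictAntiOn_of_deriv_neg (convex_Ioc u x₀) hcont (by rwa [interior_Ioc])
  filter_upwards [Ioo_mem_nhdsLT hu] with x hx
  exact hanti (Ioo_subset_Ioc_self hx) (right_mem_Ioc.2 hu) hx.2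

theorem eventually_nhdsNE_lt_of_deriv_deriv_pos {f : ℝ → ℝ} {x₀ : ℝ}
    (hf : 0 < deriv (deriv f) x₀) (hd : deriv f x₀ = 0) (hc : ContinuousAt f x₀) :
    ∀ᶠ x in 𝓝[≠] x₀, f x₀ < f x := by
  have hsign : ∀ᶠ x in 𝓝[≠] x₀, SignType.sign (deriv f x) = SignType.sign (x - x₀) :=
    nhdsWithin_le_nhds (eventually_nhdsWithin_sign_eq_of_deriv_pos hf hd)
  rw [← nhdsLT_sup_nhdsGT, eventually_sup]
  exact ⟨eventually_lt_of_deriv_neg_nhdsLT hc (deriv_neg_left_of_sign_deriv hsign),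
    eventually_lt_of_deriv_pos_nhdsGT hc (deriv_pos_right_of_sign_deriv hsign)⟩

theorem differentiableAt_of_infinite_family {g h : ℝ → ℝ} {φ : ℝ} {U : Set ℝ} (hU : U.Infinite)
    (hd : ∀ u ∈ U, DifferentiableAt ℝ (fun s => g s + u * (u - h s) ^ 2) φ) :
    DifferentiableAt ℝ h φ ∧ DifferentiableAt ℝ g φ := by
  obtain ⟨T, hTU, hT⟩ := hU.exists_subset_card_eq 3
  obtain ⟨u₁, u₂, u₃, h₁₂, h₁₃, h₂₃, rfl⟩ := Finset.card_eq_three.mp hT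
  simp only [Finset.coe_insert, Finset.coe_singleton, insert_subset_iff,
    singleton_subset_iff] at hTU
  set F := fun u s => g s + u * (u - h s) ^ 2
  -- `(F u₁ - F u₂) / (u₁ - u₂) - (F u₂ - F u₃) / (u₂ - u₃) = (u₁ - u₃) (u₁ + u₂ + u₃ - 2 h)`
  have hh : h = fun s => (u₁ + u₂ + u₃ -
      ((F u₁ s - F u₂ s) / (u₁ - u₂) - (F u₂ s - F u₃ s) / (u₂ - u₃)) / (u₁ - u₃)) / 2 := by
    funext s
    have := sub_ne_zero.mpr h₁₂
    have := sub_ne_zero.mpr h₁₃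
    have := sub_ne_zero.mpr h₂₃
    field_simp
    ring
  have hF₁ := hd u₁ hTU.1
  have hF₂ := hd u₂ hTU.2.1
  have hF₃ := hd u₃ hTU.2.2
  have hhd : DifferentiableAt ℝ h φ := by
    rw [hh]
    fun_prop
  refine ⟨hhd, ?_⟩
  have hg : g = fun s => F u₁ s - u₁ * (u₁ - h s) ^ 2 := by
    funext s
    simp only [F]
    ring
  rw [hg]
  fun_prop

namespace BoundaryCurve

def p₃ (b : ℝ → ℝ) (x φ : ℝ) : ℝ := (1 + x) * ((1 + x) ^ 2 - b φ)

def p₆ (a b : ℝ → ℝ) (x φ : ℝ) : ℝ := 6 * φ * ((1 + x) ^ 2 - a φ) - p₃ b x φ ^ 2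

def Compatible (a b : ℝ → ℝ) (x φ : ℝ) : Prop :=
  pd1 (p₆ a b) x φ + p₃ b x φ * pd2 (p₆ a b) x φ = 2 * pd2 (p₃ b) x φ * p₆ a b x φ

variable {a b : ℝ → ℝ}

theorem hasDerivAt_p₃_fst (x φ : ℝ) :
    HasDerivAt (fun y => p₃ b y φ) (3 * (1 + x) ^ 2 - b φ) x := by
  have h₁ : HasDerivAt (fun y : ℝ => 1 + y) 1 x := (hasDerivAt_id x).const_add 1
  unfold p₃
  exact (h₁.fun_mul ((h₁.fun_pow 2).sub_const (b φ))).congr_deriv (by ring)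

theorem pd1_p₃ (x φ : ℝ) : pd1 (p₃ b) x φ = 3 * (1 + x) ^ 2 - b φ :=
  (hasDerivAt_p₃_fst x φ).deriv

theorem p₃_eq (x φ : ℝ) : p₃ b x φ = (1 + x) ^ 3 - (1 + x) * b φ := by
  unfold p₃
  ring

theorem pd2_p₃ (x φ : ℝ) : pd2 (p₃ b) x φ = -((1 + x) * deriv b φ) := by
  simp only [pd2, p₃_eq, deriv_const_sub, deriv_const_mul_field]

theorem pd1_p₆ (x φ : ℝ) :
    pd1 (p₆ a b) x φ = 12 * φ * (1 + x) - 2 * p₃ b x φ * pd1 (p₃ b) x φ := by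
  have h₁ : HasDerivAt (fun y : ℝ => 1 + y) 1 x := (hasDerivAt_id x).const_add 1
  have h := (((h₁.fun_pow 2).sub_const (a φ)).const_mul (6 * φ)).fun_sub
    ((hasDerivAt_p₃_fst (b := b) x φ).fun_pow 2)
  rw [pd1, pd1_p₃]
  unfold p₆
  rw [h.deriv]
  ring

theorem hasDerivAt_p₃_snd {x φ w : ℝ} (hb : HasDerivAt b w φ) :
    HasDerivAt (fun s => p₃ b x s) (-((1 + x) * w)) φ := by
  simp only [p₃_eq]
  exact (hb.const_mul (1 + x)).const_sub _

theorem pd2_p₆ {x φ : ℝ} (hb : DifferentiableAt ℝ b φ)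
    (hg : DifferentiableAt ℝ (fun s => s * a s) φ) :
    pd2 (p₆ a b) x φ =
      6 * (1 + x) ^ 2 - 6 * deriv (fun s => s * a s) φ - 2 * p₃ b x φ * pd2 (p₃ b) x φ := by
  have h := ((((hasDerivAt_id' φ).const_mul 6).mul_const ((1 + x) ^ 2)).fun_sub
    (hg.hasDerivAt.const_mul 6)).fun_sub ((hasDerivAt_p₃_snd (x := x) hb.hasDerivAt).fun_pow 2)
  have heq : (fun s => p₆ a b x s) =
      fun s => 6 * s * (1 + x) ^ 2 - 6 * (s * a s) - p₃ b x s ^ 2 := by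
    funext s
    simp only [p₆]
    ring
  rw [pd2, heq, h.deriv, pd2_p₃]
  ring

theorem hasDerivAt_p₃_comp {δ : ℝ → ℝ} {x d : ℝ} (hδ : HasDerivAt δ d x)
    (hb : DifferentiableAt ℝ b (δ x)) :
    HasDerivAt (fun y => p₃ b y (δ y)) (pd1 (p₃ b) x (δ x) + d * pd2 (p₃ b) x (δ x)) x := by
  have h₁ : HasDerivAt (fun y : ℝ => 1 + y) 1 x := (hasDerivAt_id x).const_add 1
  rw [pd1_p₃, pd2_p₃]
  unfold p₃
  exact (h₁.fun_mul ((h₁.fun_pow 2).fun_sub (hb.hasDerivAt.comp x hδ))).congr_deriv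
    (by rw [Function.comp_apply]; ring)

theorem hasDerivAt_p₆_comp {δ : ℝ → ℝ} {x d : ℝ} (hδ : HasDerivAt δ d x)
    (hb : DifferentiableAt ℝ b (δ x)) (hg : DifferentiableAt ℝ (fun s => s * a s) (δ x)) :
    HasDerivAt (fun y => p₆ a b y (δ y))
      (pd1 (p₆ a b) x (δ x) + d * pd2 (p₆ a b) x (δ x)) x := by
  have h₁ : HasDerivAt (fun y : ℝ => 1 + y) 1 x := (hasDerivAt_id x).const_add 1
  have h := (((hδ.const_mul 6).fun_mul (h₁.fun_pow 2)).fun_sub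
    ((hg.hasDerivAt.comp x hδ).const_mul 6)).fun_sub ((hasDerivAt_p₃_comp hδ hb).fun_pow 2)
  have heq : (fun y => p₆ a b y (δ y)) =
      fun y => 6 * δ y * (1 + y) ^ 2 - 6 * (δ y * a (δ y)) - p₃ b y (δ y) ^ 2 := by
    funext y
    simp only [p₆]
    ring
  rw [heq, pd1_p₆, pd2_p₆ hb hg]
  exact h.congr_deriv (by ring)

theorem finite_setOf_compatible_pd2_p₆_eq_zero (φ : ℝ) :
    {x | Compatible a b x φ ∧ pd2 (p₆ a b) x φ = 0}.Finite := by
  set w := deriv b φ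
  -- the `t⁷` and `t⁵` coefficients of the compatibility identity in `t = 1 + x`
  have hlead : -2 * w ≠ 0 ∨ 4 * w * b φ - 6 ≠ 0 := by
    rcases eq_or_ne w 0 with hw | hw
    · right
      simp [hw]
    · left
      simpa using hw
  refine ((finite_setOf_odd_septic_eq_zero (c₃ := 8 * b φ + 2 * w * (6 * φ - b φ ^ 2))
    (c₁ := 12 * φ - 2 * b φ ^ 2 - 12 * w * φ * a φ) hlead).preimage
    (add_right_injective 1).injOn).subset ?_
  rintro x ⟨hc, hD⟩
  rw [Compatible, hD, pd1_p₆, pd1_p₃, pd2_p₃] at hc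
  simp only [p₆, p₃] at hc
  simp only [mem_preimage, mem_ofPred_eq]
  linear_combination hc

theorem differentiableAt_of_compatible {ε φ : ℝ} (hε : 0 < ε)
    (hcompat : ∀ x ∈ Ioo 0 ε, Compatible a b x φ) :
    DifferentiableAt ℝ b φ ∧ DifferentiableAt ℝ (fun s => s * a s) φ := by
  set S := Ioo 0 ε \ {x | Compatible a b x φ ∧ pd2 (p₆ a b) x φ = 0}
  have hinj : InjOn (fun x : ℝ => (1 + x) ^ 2) S := fun x hx y hy hxy => by
    nlinarith [hx.1.1, hy.1.1]
  have hfamily : ∀ u ∈ (fun x : ℝ => (1 + x) ^ 2) '' S,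
      DifferentiableAt ℝ (fun s => 6 * (s * a s) + u * (u - b s) ^ 2) φ := by
    rintro _ ⟨x, ⟨hx, hxZ⟩, rfl⟩
    have hp₆ : DifferentiableAt ℝ (fun s => p₆ a b x s) φ :=
      differentiableAt_of_deriv_ne_zero fun h => hxZ ⟨hcompat x hx, h⟩
    have heq : (fun s => 6 * (s * a s) + (1 + x) ^ 2 * ((1 + x) ^ 2 - b s) ^ 2) =
        fun s => 6 * s * (1 + x) ^ 2 - p₆ a b x s := by
      funext s
      simp only [p₆, p₃]
      ring
    rw [heq]
    fun_prop
  obtain ⟨hb, hg⟩ := differentiableAt_of_infinite_family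
    (((Ioo_infinite hε).sdiff (finite_setOf_compatible_pd2_p₆_eq_zero φ)).image hinj) hfamily
  exact ⟨hb, by simpa using hg.const_mul 6⁻¹⟩

theorem eq_p₃_of_hasDerivAt {δ : ℝ → ℝ} {x d : ℝ} (hb : DifferentiableAt ℝ b (δ x))
    (hg : DifferentiableAt ℝ (fun s => s * a s) (δ x)) (hcompat : Compatible a b x (δ x))
    (hδ : HasDerivAt δ d x) (hzero : ∀ᶠ y in 𝓝 x, p₆ a b y (δ y) = 0)
    (hnz : pd2 (p₆ a b) x (δ x) ≠ 0) : d = p₃ b x (δ x) := by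
  have hchain : pd1 (p₆ a b) x (δ x) + d * pd2 (p₆ a b) x (δ x) = 0 :=
    (hasDerivAt_p₆_comp hδ hb hg).unique ((hasDerivAt_const x 0).congr_of_eventuallyEq hzero)
  rw [Compatible, hzero.self_of_nhds, mul_zero] at hcompat
  exact mul_right_cancel₀ hnz (by linear_combination hchain - hcompat)

end BoundaryCurve

open BoundaryCurve

theorem boundary_curve_strict_minimum_general
    (a b : ℝ → ℝ)
    (hb0 : b 0 = 1)
    (P3 P6 : ℝ → ℝ → ℝ)
    (hP3 : ∀ x φ, P3 x φ = (1+x)*((1+x)^2 - b φ))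
    (hP6 : ∀ x φ, P6 x φ = 6*φ*((1+x)^2 - a φ) - (P3 x φ)^2)
    (ε : ℝ) (hε : 0 < ε)
    (hcompat : ∀ x ∈ Set.Ioo (-ε) ε, ∀ φ ∈ Set.Ioo (-ε) ε,
      pd1 P6 x φ + P3 x φ * pd2 P6 x φ = 2 * pd2 P3 x φ * P6 x φ)
    (δ : ℝ → ℝ) (hδ : ContDiffOn ℝ 2 δ (Set.Ioo (-ε) ε)) (hδ0 : δ 0 = 0)
    (hδmem : ∀ x ∈ Set.Ioo (-ε) ε, δ x ∈ Set.Ioo (-ε) ε)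
    (hzero : ∀ x ∈ Set.Ioo (-ε) ε, P6 x (δ x) = 0)
    (hnz : ∀ x ∈ Set.Ioo (-ε) ε, pd2 P6 x (δ x) ≠ 0) :
    (∀ x ∈ Set.Ioo (-ε) ε, deriv δ x = P3 x (δ x)) ∧
    deriv δ 0 = 0 ∧
    deriv (deriv δ) 0 = 2 ∧ pd1 P3 0 0 = 2 ∧
    (∃ ε' > 0, ∀ x ∈ Set.Ioo (-ε') ε', x ≠ 0 → 0 < δ x) := by
  obtain rfl : P3 = p₃ b := funext fun x => funext (hP3 x)
  obtain rfl : P6 = p₆ a b := funext fun x => funext (hP6 x)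
  have hI : IsOpen (Ioo (-ε) ε) := isOpen_Ioo
  have h0 : (0 : ℝ) ∈ Ioo (-ε) ε := ⟨by linarith, hε⟩
  have hδd : ∀ x ∈ Ioo (-ε) ε, HasDerivAt δ (deriv δ x) x := fun x hx =>
    ((hδ.differentiableOn (by norm_num) x hx).differentiableAt (hI.mem_nhds hx)).hasDerivAt
  have hdiff (φ) (hφ : φ ∈ Ioo (-ε) ε) :
      DifferentiableAt ℝ b φ ∧ DifferentiableAt ℝ (fun s => s * a s) φ :=
    differentiableAt_of_compatible hε fun x hx => hcompat x ⟨by linarith [hx.1], hx.2⟩ φ hφ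
  have hδ' : ∀ x ∈ Ioo (-ε) ε, deriv δ x = p₃ b x (δ x) := fun x hx =>
    eq_p₃_of_hasDerivAt (hdiff _ (hδmem x hx)).1 (hdiff _ (hδmem x hx)).2
      (hcompat x hx _ (hδmem x hx)) (hδd x hx) (eventually_of_mem (hI.mem_nhds hx) hzero)
      (hnz x hx)
  have hδ'0 : deriv δ 0 = 0 := by simp [hδ' 0 h0, hδ0, p₃, hb0]
  have hpd1 : pd1 (p₃ b) 0 0 = 2 := by rw [pd1_p₃, hb0]; norm_num
  have hδ''0 : HasDerivAt (deriv δ) 2 0 := by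
    have h := hasDerivAt_p₃_comp (hδd 0 h0) (hδ0 ▸ (hdiff 0 h0).1)
    rw [hδ'0, hδ0, hpd1, zero_mul, add_zero] at h
    exact h.congr_of_eventuallyEq (eventually_of_mem (hI.mem_nhds h0) hδ')
  refine ⟨hδ', hδ'0, hδ''0.deriv, hpd1, ?_⟩
  have hmin := eventually_nhdsNE_lt_of_deriv_deriv_pos (by rw [hδ''0.deriv]; norm_num) hδ'0
    (hδd 0 h0).continuousAt
  obtain ⟨η, hη, hball⟩ := Metric.mem_nhdsWithin_iff.mp hmin
  refine ⟨η, hη, fun x hx hx0 => ?_⟩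
  have hx' : x ∈ Metric.ball 0 η := by rwa [Real.ball_eq_Ioo, zero_sub, zero_add]
  simpa [hδ0] using hball ⟨hx', hx0⟩

/-- With `P₃(x,φ) = (1+x)[(1+x)²−b(φ)]`,
`P₆(x,φ) = 6φ[(1+x)²−a(φ)] − P₃(x,φ)²`, the compatibility identity
`∂_x P₆ + P₃ ∂_φ P₆ = 2(∂_φ P₃)P₆`, and `δ` the implicit curve with `P₆(x,δ(x)) = 0`,
`δ(0) = 0`, the curve satisfies `δ'(x) = P₃(x,δ(x))`; consequently `δ'(0) = 0`,
`δ''(0) = ∂_x P₃(0,0) = 2`, and `δ` has a strict local minimum `0` at `x = 0`. -/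
theorem boundary_curve_strict_minimum
    (a b : ℝ → ℝ)
    (ha : ContDiffAt ℝ 2 a 0) (hb : ContDiffAt ℝ 2 b 0)
    (ha0 : a 0 = 1/3) (hb0 : b 0 = 1)
    (P3 P6 : ℝ → ℝ → ℝ)
    (hP3 : ∀ x φ, P3 x φ = (1+x)*((1+x)^2 - b φ))
    (hP6 : ∀ x φ, P6 x φ = 6*φ*((1+x)^2 - a φ) - (P3 x φ)^2)
    (ε : ℝ) (hε : 0 < ε)
    (hcompat : ∀ x ∈ Set.Ioo (-ε) ε, ∀ φ ∈ Set.Ioo (-ε) ε,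
      pd1 P6 x φ + P3 x φ * pd2 P6 x φ = 2 * pd2 P3 x φ * P6 x φ)
    (δ : ℝ → ℝ) (hδ : ContDiffOn ℝ 2 δ (Set.Ioo (-ε) ε)) (hδ0 : δ 0 = 0)
    (hδmem : ∀ x ∈ Set.Ioo (-ε) ε, δ x ∈ Set.Ioo (-ε) ε)
    (hzero : ∀ x ∈ Set.Ioo (-ε) ε, P6 x (δ x) = 0)
    (hnz : ∀ x ∈ Set.Ioo (-ε) ε, pd2 P6 x (δ x) ≠ 0) :
    (∀ x ∈ Set.Ioo (-ε) ε, deriv δ x = P3 x (δ x)) ∧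
    deriv δ 0 = 0 ∧
    deriv (deriv δ) 0 = 2 ∧ pd1 P3 0 0 = 2 ∧
    (∃ ε' > 0, ∀ x ∈ Set.Ioo (-ε') ε', x ≠ 0 → 0 < δ x) :=
  boundary_curve_strict_minimum_general a b hb0 P3 P6 hP3 hP6 ε hε hcompat δ hδ hδ0 hδmem hzero hnz
end

section
/- For the hodograph system of the 2D Boussinesq construction: suppose U(x₂,ψ) = p'(ψ)(x₂ − β(ψ)), Θ, H functions of ψ with Q₁(x₂,ψ) = 2(x₂Θ(ψ) + H(ψ)), and V² = Q₁ − U². Then the compatibility equation 2V²U' = ∂₂(V²) + U(V²)' (with ' = d/dψ, ∂₂ = ∂/∂x₂) holds as a polynomial identity in x₂ if and only if: Θ = k(p')² for some constant k, Θ = −2p'β'(βΘ + H), and (p')² − 2Θp'β' + 2Hp'' − p'H' = 0. -/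
/-!
At fixed `ψ`, the residual `∂₂V² + U(V²)' − 2V²U'` of the compatibility equation is a quadratic
polynomial in `x₂`. Its three coefficients form a triangular system in
`E₁ = p'Θ' − 2Θp''`, `E₂ = Θ + 2p'β'(βΘ + H)` and `E₃ = (p')² − 2Θp'β' + 2Hp'' − p'H'`, so the
equation holds for all `x₂` exactly when `E₁ = E₂ = E₃ = 0`. Where `p' ≠ 0`, the condition
`E₁ = 0` says that `Θ / (p')²` has zero derivative, i.e. is constant on the interval.
-/

theorem quadratic_eq_zero_forall_iff {a b c : ℝ} :
    (∀ x : ℝ, a * x ^ 2 + b * x + c = 0) ↔ a = 0 ∧ b = 0 ∧ c = 0 := by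
  refine ⟨fun h => ?_, fun ⟨ha, hb, hc⟩ x => by simp [ha, hb, hc]⟩
  have h0 := h 0
  have h1 := h 1
  have hm := h (-1)
  norm_num at h0 h1 hm
  exact ⟨by linarith, by linarith, by linarith⟩

theorem exists_eq_const_mul_sq_iff {s : Set ℝ} (hs : IsOpen s) (hs' : IsPreconnected s)
    {f g : ℝ → ℝ} (hf : ∀ t ∈ s, DifferentiableAt ℝ f t) (hg : ∀ t ∈ s, DifferentiableAt ℝ g t)
    (hg0 : ∀ t ∈ s, g t ≠ 0) :
    (∃ k, ∀ t ∈ s, f t = k * g t ^ 2) ↔ ∀ t ∈ s, g t * deriv f t = 2 * f t * deriv g t := by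
  constructor
  · rintro ⟨k, hk⟩ t ht
    have hfk : f =ᶠ[nhds t] fun u => k * g u ^ 2 := Filter.eventuallyEq_of_mem (hs.mem_nhds ht) hk
    have hderiv : HasDerivAt (fun u => k * g u ^ 2) (k * (2 * g t * deriv g t)) t :=
      ((hg t ht).hasDerivAt.fun_pow 2).const_mul k |>.congr_deriv (by norm_num)
    rw [hfk.deriv_eq, hderiv.deriv, hk t ht]
    ring
  · intro hfg
    have hquot : ∀ t ∈ s, HasDerivAt (fun u => f u / g u ^ 2) 0 t := by
      intro t ht
      refine ((hf t ht).hasDerivAt.fun_div ((hg t ht).hasDerivAt.fun_pow 2)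
        (pow_ne_zero 2 (hg0 t ht))).congr_deriv ?_
      rw [div_eq_zero_iff]
      left
      push_cast
      linear_combination g t * hfg t ht
    obtain ⟨k, hk⟩ := hs.exists_is_const_of_deriv_eq_zero hs'
      (fun t ht => (hquot t ht).differentiableAt.differentiableWithinAt)
      (fun t ht => (hquot t ht).deriv)
    exact ⟨k, fun t ht => by rw [← hk t ht, div_mul_cancel₀ _ (pow_ne_zero 2 (hg0 t ht))]⟩

section Hodograph

variable {a b θ η : ℝ → ℝ} {ψ a' b' θ' η' : ℝ}

/-- The paper's `U`, with `a = p'` and `b = β`. -/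
def hodographU (a b : ℝ → ℝ) (x t : ℝ) : ℝ := a t * (x - b t)

/-- The paper's `V² = Q₁ − U²`, with `θ = Θ` and `η = H`. -/
def hodographV2 (a b θ η : ℝ → ℝ) (x t : ℝ) : ℝ := 2 * (x * θ t + η t) - hodographU a b x t ^ 2

theorem hasDerivAt_hodographU (ha : HasDerivAt a a' ψ) (hb : HasDerivAt b b' ψ) (x : ℝ) :
    HasDerivAt (hodographU a b x) (a' * (x - b ψ) - a ψ * b') ψ :=
  (ha.fun_mul (hb.const_sub x)).congr_deriv (by ring)

theorem hasDerivAt_hodographV2 (ha : HasDerivAt a a' ψ) (hb : HasDerivAt b b' ψ)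
    (hθ : HasDerivAt θ θ' ψ) (hη : HasDerivAt η η' ψ) (x : ℝ) :
    HasDerivAt (hodographV2 a b θ η x)
      (2 * (x * θ' + η') - 2 * hodographU a b x ψ * (a' * (x - b ψ) - a ψ * b')) ψ :=
  (((hθ.const_mul x).fun_add hη).const_mul 2).fun_sub
    ((hasDerivAt_hodographU ha hb x).fun_pow 2) |>.congr_deriv (by norm_num)

theorem pd1_hodographV2 (x : ℝ) :
    pd1 (hodographV2 a b θ η) x ψ = 2 * θ ψ - 2 * a ψ ^ 2 * (x - b ψ) := by
  have hU : HasDerivAt (fun s => hodographU a b s ψ) (a ψ) x :=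
    ((hasDerivAt_id x).sub_const (b ψ)).const_mul (a ψ) |>.congr_deriv (mul_one _)
  have hV2 : HasDerivAt (fun s => hodographV2 a b θ η s ψ)
      (2 * θ ψ - 2 * a ψ ^ 2 * (x - b ψ)) x :=
    ((((hasDerivAt_id x).mul_const (θ ψ)).add_const (η ψ)).const_mul 2).fun_sub (hU.fun_pow 2)
      |>.congr_deriv (by simp only [hodographU]; norm_num; ring)
  exact hV2.deriv

theorem hodograph_compatibility_iff (ha : HasDerivAt a a' ψ) (hb : HasDerivAt b b' ψ)
    (hθ : HasDerivAt θ θ' ψ) (hη : HasDerivAt η η' ψ) :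
    (∀ x : ℝ, 2 * hodographV2 a b θ η x ψ * pd2 (hodographU a b) x ψ
        = pd1 (hodographV2 a b θ η) x ψ
          + hodographU a b x ψ * pd2 (hodographV2 a b θ η) x ψ)
    ↔ a ψ * θ' = 2 * θ ψ * a' ∧ θ ψ = -2 * a ψ * b' * (b ψ * θ ψ + η ψ) ∧
      a ψ ^ 2 - 2 * θ ψ * a ψ * b' + 2 * η ψ * a' - a ψ * η' = 0 := by
  set E₁ := a ψ * θ' - 2 * θ ψ * a'
  set E₂ := θ ψ + 2 * a ψ * b' * (b ψ * θ ψ + η ψ)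
  set E₃ := a ψ ^ 2 - 2 * θ ψ * a ψ * b' + 2 * η ψ * a' - a ψ * η'
  trans ∀ x : ℝ, 2 * E₁ * x ^ 2 + (-2 * E₃ - 2 * b ψ * E₁) * x + (2 * E₂ + 2 * b ψ * E₃) = 0
  · refine forall_congr' fun x => ?_
    rw [pd2, pd2, (hasDerivAt_hodographU ha hb x).deriv, pd1_hodographV2,
      (hasDerivAt_hodographV2 ha hb hθ hη x).deriv]
    simp only [hodographV2, hodographU]
    constructor <;> intro h <;> linear_combination -h
  rw [quadratic_eq_zero_forall_iff]
  constructor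
  · rintro ⟨h₂, h₁, h₀⟩
    refine ⟨by linear_combination h₂ / 2, ?_, ?_⟩
    · linear_combination h₀ / 2 + b ψ * (h₁ / 2 + b ψ * h₂ / 2)
    · linear_combination -h₁ / 2 - b ψ * h₂ / 2
  · rintro ⟨h₁, h₂, h₃⟩
    refine ⟨by linear_combination 2 * h₁, ?_, ?_⟩
    · linear_combination -2 * h₃ - 2 * b ψ * h₁
    · linear_combination 2 * h₂ + 2 * b ψ * h₃

end Hodograph

theorem boussinesq_hodograph_compatibility_iff_general
    (c d : ℝ)
    (p β Θ H : ℝ → ℝ)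
    (hp' : ∀ ψ ∈ Set.Ioo c d, DifferentiableAt ℝ (deriv p) ψ)
    (hβ : ∀ ψ ∈ Set.Ioo c d, DifferentiableAt ℝ β ψ)
    (hΘ : ∀ ψ ∈ Set.Ioo c d, DifferentiableAt ℝ Θ ψ)
    (hH : ∀ ψ ∈ Set.Ioo c d, DifferentiableAt ℝ H ψ)
    (hp'ne : ∀ ψ ∈ Set.Ioo c d, deriv p ψ ≠ 0)
    (U Q1 V2 : ℝ → ℝ → ℝ)
    (hU : ∀ x₂ t, U x₂ t = deriv p t * (x₂ - β t))
    (hQ1 : ∀ x₂ t, Q1 x₂ t = 2*(x₂*Θ t + H t))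
    (hV2 : ∀ x₂ t, V2 x₂ t = Q1 x₂ t - (U x₂ t)^2) :
    (∀ ψ ∈ Set.Ioo c d, ∀ x₂ : ℝ,
        2 * V2 x₂ ψ * pd2 U x₂ ψ = pd1 V2 x₂ ψ + U x₂ ψ * pd2 V2 x₂ ψ) ↔
      ((∃ k : ℝ, ∀ ψ ∈ Set.Ioo c d, Θ ψ = k * (deriv p ψ)^2) ∧
       (∀ ψ ∈ Set.Ioo c d,
          Θ ψ = -2 * deriv p ψ * deriv β ψ * (β ψ * Θ ψ + H ψ)) ∧
       (∀ ψ ∈ Set.Ioo c d,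
          (deriv p ψ)^2 - 2*Θ ψ*deriv p ψ*deriv β ψ
            + 2*H ψ*deriv (deriv p) ψ - deriv p ψ*deriv H ψ = 0)) := by
  obtain rfl : V2 = hodographV2 (deriv p) β Θ H :=
    funext₂ fun x t => by rw [hV2, hQ1, hU, hodographV2, hodographU]
  obtain rfl : U = hodographU (deriv p) β := funext₂ hU
  have hpointwise := fun ψ (hψ : ψ ∈ Set.Ioo c d) => hodograph_compatibility_iff
    (hp' ψ hψ).hasDerivAt (hβ ψ hψ).hasDerivAt (hΘ ψ hψ).hasDerivAt (hH ψ hψ).hasDerivAt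
  rw [forall₂_congr hpointwise, forall₂_and, forall₂_and,
    exists_eq_const_mul_sq_iff isOpen_Ioo isPreconnected_Ioo hΘ hp' hp'ne]

/-- For the 2D Boussinesq hodograph system, with
`U(x₂,ψ) = p'(ψ)(x₂ − β(ψ))`, `Q₁(x₂,ψ) = 2(x₂Θ(ψ) + H(ψ))` and `V² = Q₁ − U²`, the
compatibility identity `2V²∂_ψU = ∂₂(V²) + U ∂_ψ(V²)` holds for all `x₂` (and all `ψ`
in the interval `I`) if and only if: `Θ = k(p')²` for some constant `k`,
`Θ = −2p'β'(βΘ + H)`, and `(p')² − 2Θp'β' + 2Hp'' − p'H' = 0` on `I`. -/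
theorem boussinesq_hodograph_compatibility_iff
    (c d : ℝ) (hcd : c < d)
    (p β Θ H : ℝ → ℝ)
    (hp : ∀ ψ ∈ Set.Ioo c d, DifferentiableAt ℝ p ψ)
    (hp' : ∀ ψ ∈ Set.Ioo c d, DifferentiableAt ℝ (deriv p) ψ)
    (hβ : ∀ ψ ∈ Set.Ioo c d, DifferentiableAt ℝ β ψ)
    (hΘ : ∀ ψ ∈ Set.Ioo c d, DifferentiableAt ℝ Θ ψ)
    (hH : ∀ ψ ∈ Set.Ioo c d, DifferentiableAt ℝ H ψ)
    (hp'ne : ∀ ψ ∈ Set.Ioo c d, deriv p ψ ≠ 0)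
    (U Q1 V2 : ℝ → ℝ → ℝ)
    (hU : ∀ x₂ t, U x₂ t = deriv p t * (x₂ - β t))
    (hQ1 : ∀ x₂ t, Q1 x₂ t = 2*(x₂*Θ t + H t))
    (hV2 : ∀ x₂ t, V2 x₂ t = Q1 x₂ t - (U x₂ t)^2) :
    (∀ ψ ∈ Set.Ioo c d, ∀ x₂ : ℝ,
        2 * V2 x₂ ψ * pd2 U x₂ ψ = pd1 V2 x₂ ψ + U x₂ ψ * pd2 V2 x₂ ψ) ↔
      ((∃ k : ℝ, ∀ ψ ∈ Set.Ioo c d, Θ ψ = k * (deriv p ψ)^2) ∧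
       (∀ ψ ∈ Set.Ioo c d,
          Θ ψ = -2 * deriv p ψ * deriv β ψ * (β ψ * Θ ψ + H ψ)) ∧
       (∀ ψ ∈ Set.Ioo c d,
          (deriv p ψ)^2 - 2*Θ ψ*deriv p ψ*deriv β ψ
            + 2*H ψ*deriv (deriv p) ψ - deriv p ψ*deriv H ψ = 0)) :=
  boussinesq_hodograph_compatibility_iff_general c d p β Θ H hp' hβ hΘ hH hp'ne U Q1 V2 hU hQ1 hV2
end

section
/- For the 2D incompressible porous medium equation: let 0 < s < 1, k ∈ R, and define ψ(x,y) = ((1−s)(x − x₀ − k(y−y₀))/(1+k²))^{1/(1−s)} on the region where x − x₀ − k(y−y₀) > 0, p = kψ, θ = ψ^s, u = ∇⊥ψ. Then u·∇θ = 0, div u = 0, and u = θ e₂ + ∇p hold on that region. -/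
open Filter Topology

noncomputable section

def phase (k x₀ y₀ x y : ℝ) : ℝ := x - x₀ - k * (y - y₀)

def ipmProfile (s k z : ℝ) : ℝ := ((1 - s) * z / (1 + k ^ 2)) ^ ((1 : ℝ) / (1 - s))

end

section PlaneWave

variable {k x₀ y₀ x y : ℝ} {S : Set ℝ} {f : ℝ → ℝ → ℝ} {g : ℝ → ℝ}

lemma pd1_eq_deriv_of_eqOn_phase (hS : IsOpen S)
    (hfg : ∀ x y, phase k x₀ y₀ x y ∈ S → f x y = g (phase k x₀ y₀ x y))
    (hxy : phase k x₀ y₀ x y ∈ S) (hg : DifferentiableAt ℝ g (phase k x₀ y₀ x y)) :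
    pd1 f x y = deriv g (phase k x₀ y₀ x y) := by
  have hphase : HasDerivAt (fun t => phase k x₀ y₀ t y) 1 x :=
    ((hasDerivAt_id x).sub_const _).sub_const _
  have hev : (fun t => f t y) =ᶠ[𝓝 x] fun t => g (phase k x₀ y₀ t y) :=
    eventually_of_mem (hphase.continuousAt.preimage_mem_nhds (hS.mem_nhds hxy))
      fun t ht => hfg t y ht
  rw [pd1, hev.deriv_eq]
  exact (hg.hasDerivAt.comp x hphase).deriv.trans (mul_one _)

lemma pd2_eq_deriv_of_eqOn_phase (hS : IsOpen S)
    (hfg : ∀ x y, phase k x₀ y₀ x y ∈ S → f x y = g (phase k x₀ y₀ x y))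
    (hxy : phase k x₀ y₀ x y ∈ S) (hg : DifferentiableAt ℝ g (phase k x₀ y₀ x y)) :
    pd2 f x y = -k * deriv g (phase k x₀ y₀ x y) := by
  have hphase : HasDerivAt (fun t => phase k x₀ y₀ x t) (-k) y := by
    show HasDerivAt (fun t => x - x₀ - k * (t - y₀)) (-k) y
    simpa using (((hasDerivAt_id y).sub_const y₀).const_mul k).const_sub (x - x₀)
  have hev : (fun t => f x t) =ᶠ[𝓝 y] fun t => g (phase k x₀ y₀ x t) :=
    eventually_of_mem (hphase.continuousAt.preimage_mem_nhds (hS.mem_nhds hxy))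
      fun t ht => hfg x t ht
  rw [pd2, hev.deriv_eq]
  exact (hg.hasDerivAt.comp y hphase).deriv.trans (mul_comm _ _)

end PlaneWave

section IPM

variable {k x₀ y₀ : ℝ} {S : Set ℝ} {F Θ : ℝ → ℝ} {ψ p θ u₁ u₂ : ℝ → ℝ → ℝ}

theorem ipm_of_planeWave (hS : IsOpen S)
    (hF : ∀ z ∈ S, HasDerivAt F (Θ (F z) / (1 + k ^ 2)) z)
    (hΘF : ∀ z ∈ S, DifferentiableAt ℝ (fun z => Θ (F z)) z)
    (hψ : ∀ x y, ψ x y = F (phase k x₀ y₀ x y)) (hp : ∀ x y, p x y = k * ψ x y)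
    (hθ : ∀ x y, θ x y = Θ (ψ x y))
    (hu₁ : ∀ x y, u₁ x y = -(pd2 ψ x y)) (hu₂ : ∀ x y, u₂ x y = pd1 ψ x y)
    {x y : ℝ} (hxy : phase k x₀ y₀ x y ∈ S) :
    u₁ x y * pd1 θ x y + u₂ x y * pd2 θ x y = 0 ∧
      pd1 u₁ x y + pd2 u₂ x y = 0 ∧
      u₁ x y = pd1 p x y ∧
      u₂ x y = θ x y + pd2 p x y := by
  set z := phase k x₀ y₀ x y
  have hψ' : ∀ x y, phase k x₀ y₀ x y ∈ S → ψ x y = F (phase k x₀ y₀ x y) := fun x y _ => hψ x y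
  have hu₁' : ∀ x y, phase k x₀ y₀ x y ∈ S →
      u₁ x y = k * Θ (F (phase k x₀ y₀ x y)) / (1 + k ^ 2) := fun x y h => by
    rw [hu₁, pd2_eq_deriv_of_eqOn_phase hS hψ' h (hF _ h).differentiableAt, (hF _ h).deriv]
    ring
  have hu₂' : ∀ x y, phase k x₀ y₀ x y ∈ S →
      u₂ x y = Θ (F (phase k x₀ y₀ x y)) / (1 + k ^ 2) := fun x y h => by
    rw [hu₂, pd1_eq_deriv_of_eqOn_phase hS hψ' h (hF _ h).differentiableAt, (hF _ h).deriv]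
  have hθ' : ∀ x y, phase k x₀ y₀ x y ∈ S → θ x y = Θ (F (phase k x₀ y₀ x y)) :=
    fun x y _ => by rw [hθ, hψ]
  have hp' : ∀ x y, phase k x₀ y₀ x y ∈ S → p x y = k * F (phase k x₀ y₀ x y) :=
    fun x y _ => by rw [hp, hψ]
  have hkF : HasDerivAt (fun z => k * F z) (k * (Θ (F z) / (1 + k ^ 2))) z := (hF z hxy).const_mul k
  have hΘ := hΘF z hxy
  have hdu₁ : pd1 u₁ x y = k * deriv (fun z => Θ (F z)) z / (1 + k ^ 2) := by
    rw [pd1_eq_deriv_of_eqOn_phase hS hu₁' hxy ((hΘ.const_mul k).div_const _), deriv_div_const,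
      deriv_const_mul _ hΘ]
  have hdu₂ : pd2 u₂ x y = -k * (deriv (fun z => Θ (F z)) z / (1 + k ^ 2)) := by
    rw [pd2_eq_deriv_of_eqOn_phase hS hu₂' hxy (hΘ.div_const _), deriv_div_const]
  rw [pd1_eq_deriv_of_eqOn_phase hS hθ' hxy hΘ, pd2_eq_deriv_of_eqOn_phase hS hθ' hxy hΘ,
    pd1_eq_deriv_of_eqOn_phase hS hp' hxy hkF.differentiableAt,
    pd2_eq_deriv_of_eqOn_phase hS hp' hxy hkF.differentiableAt, hkF.deriv, hdu₁, hdu₂,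
    hu₁' x y hxy, hu₂' x y hxy, hθ' x y hxy]
  refine ⟨by ring, by ring, by ring, ?_⟩
  field_simp
  ring

end IPM

section Profile

variable {s k z : ℝ}

lemma ipmProfile_pos (hz : 0 < (1 - s) * z) : 0 < ipmProfile s k z :=
  Real.rpow_pos_of_pos (div_pos hz (by positivity)) _

lemma hasDerivAt_ipmProfile (hz : 0 < (1 - s) * z) :
    HasDerivAt (ipmProfile s k) (ipmProfile s k z ^ s / (1 + k ^ 2)) z := by
  have hs : 1 - s ≠ 0 := by
    rintro h
    simp [h] at hz
  have hbase : 0 < (1 - s) * z / (1 + k ^ 2) := div_pos hz (by positivity)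
  have hlin : HasDerivAt (fun z => (1 - s) * z / (1 + k ^ 2)) ((1 - s) * 1 / (1 + k ^ 2)) z :=
    ((hasDerivAt_id z).const_mul (1 - s)).div_const _
  have hexp : 1 / (1 - s) - 1 = 1 / (1 - s) * s := by
    field_simp
    ring
  refine (hlin.rpow_const (p := 1 / (1 - s)) (Or.inl hbase.ne')).congr_deriv ?_
  rw [ipmProfile, ← Real.rpow_mul hbase.le, ← hexp]
  field_simp

end Profile

theorem ipm_explicit_solution_general
    (s k x₀ y₀ : ℝ) (hs1 : s < 1)
    (ψ p θ u₁ u₂ : ℝ → ℝ → ℝ)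
    (hψ : ∀ x y, ψ x y =
      ((1-s)*(x - x₀ - k*(y - y₀))/(1+k^2)) ^ ((1:ℝ)/(1-s)))
    (hp : ∀ x y, p x y = k * ψ x y)
    (hθ : ∀ x y, θ x y = (ψ x y) ^ s)
    (hu₁ : ∀ x y, u₁ x y = -(pd2 ψ x y))
    (hu₂ : ∀ x y, u₂ x y = pd1 ψ x y) :
    ∀ x y : ℝ, 0 < x - x₀ - k*(y - y₀) →
      u₁ x y * pd1 θ x y + u₂ x y * pd2 θ x y = 0 ∧
      pd1 u₁ x y + pd2 u₂ x y = 0 ∧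
      u₁ x y = pd1 p x y ∧
      u₂ x y = θ x y + pd2 p x y := by
  intro x y hxy
  have hz : ∀ z ∈ Set.Ioi (0 : ℝ), 0 < (1 - s) * z := fun z hz => mul_pos (sub_pos.2 hs1) hz
  exact ipm_of_planeWave (Θ := fun v => v ^ s) isOpen_Ioi
    (fun z h => hasDerivAt_ipmProfile (hz z h))
    (fun z h => (hasDerivAt_ipmProfile (hz z h)).differentiableAt.rpow_const
      (Or.inl (ipmProfile_pos (hz z h)).ne'))
    hψ hp hθ hu₁ hu₂ hxy

/-- The explicit profile
`ψ(x,y) = ((1−s)(x − x₀ − k(y−y₀))/(1+k²))^{1/(1−s)}`, with `p = kψ`, `θ = ψˢ` and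
`u = ∇⊥ψ = (−∂_yψ, ∂_xψ)`, solves the steady 2D incompressible porous medium system
`u·∇θ = 0`, `div u = 0`, `u = θ e₂ + ∇p` on the region `{x − x₀ − k(y−y₀) > 0}`. -/
theorem ipm_explicit_solution
    (s k x₀ y₀ : ℝ) (hs0 : 0 < s) (hs1 : s < 1)
    (ψ p θ u₁ u₂ : ℝ → ℝ → ℝ)
    (hψ : ∀ x y, ψ x y =
      ((1-s)*(x - x₀ - k*(y - y₀))/(1+k^2)) ^ ((1:ℝ)/(1-s)))
    (hp : ∀ x y, p x y = k * ψ x y)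
    (hθ : ∀ x y, θ x y = (ψ x y) ^ s)
    (hu₁ : ∀ x y, u₁ x y = -(pd2 ψ x y))
    (hu₂ : ∀ x y, u₂ x y = pd1 ψ x y) :
    ∀ x y : ℝ, 0 < x - x₀ - k*(y - y₀) →
      u₁ x y * pd1 θ x y + u₂ x y * pd2 θ x y = 0 ∧
      pd1 u₁ x y + pd2 u₂ x y = 0 ∧
      u₁ x y = pd1 p x y ∧
      u₂ x y = θ x y + pd2 p x y :=
  ipm_explicit_solution_general s k x₀ y₀ hs1 ψ p θ u₁ u₂ hψ hp hθ hu₁ hu₂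
end
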